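/- Consider the finite abstraction product game with finite nonempty sets X̂, Q, Û, Ŵ, accepting set F ⊆ Q, δ ∈ [0,1], row-stochastic transition function T̂, and nonempty set-valued map S as in the context. Define V̄*_n : X̂ × Q → ℝ by V̄*_0(x̂,q) = 1 if q ∈ F and 0 otherwise, and V̄*_{n+1}(x̂,q) = 1 if q ∈ F, otherwise V̄*_{n+1}(x̂,q) = max_{û∈Û} min_{ŵ∈Ŵ} (1−δ)·Σ_{x̂'∈X̂} (min_{q'∈S(q,x̂')} V̄*_n(x̂',q'))·T̂(x̂,û,ŵ)(x̂'). Then for every horizon H ∈ ℕ and every (x̂,q) ∈ X̂ × Q, V̄*_H(x̂,q) = max over Markov policies ρ for Player I over horizon H of the min over Markov policies λ for Player II over horizon H of V̄^{ρ,λ}_H(x̂,q), where both extrema over the finite sets of Markov policies are attained. -/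
import Mathlib


/-- Cost-to-go `V̄^{ρ,λ}_n` of the finite abstraction product game under Markov policies
`ρ` (Player I) and `λ` (Player II) over horizon `H`:
`V̄^{ρ,λ}_0(x̂,q) = 1_F(q)`; `V̄^{ρ,λ}_{n+1}(x̂,q) = 1` if `q ∈ F`, otherwise
`V̄^{ρ,λ}_{n+1}(x̂,q) = (1−δ) Σ_{x̂'} (min_{q' ∈ S(q,x̂')} V̄^{ρ,λ}_n(x̂',q')) T̂(x̂,û,ŵ)(x̂')`
with `û = ρ_{H−n−1}(x̂,q)` and `ŵ = λ_{H−n−1}(x̂,q,û)`. -/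
noncomputable def Vpol {X Q U W : Type*} [Fintype X] [DecidableEq Q]
    (F : Finset Q) (δ : ℝ) (T : X → U → W → X → ℝ) (S : Q → X → Finset Q)
    (hS : ∀ (q : Q) (x' : X), (S q x').Nonempty)
    (ρ : ℕ → X → Q → U) (lam : ℕ → X → Q → U → W) (H : ℕ) : ℕ → X → Q → ℝ
  | 0 => fun _ q => if q ∈ F then 1 else 0
  | n + 1 => fun x q =>
      if q ∈ F then 1
      else (1 - δ) * ∑ x' : X,
        ((S q x').inf' (hS q x') fun q' => Vpol F δ T S hS ρ lam H n x' q') *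
          T x (ρ (H - n - 1) x q) (lam (H - n - 1) x q (ρ (H - n - 1) x q)) x'

/-- Optimal (max-min) Bellman recursion `V̄*_n` of the finite abstraction product game:
`V̄*_0(x̂,q) = 1_F(q)`; `V̄*_{n+1}(x̂,q) = 1` if `q ∈ F`, otherwise
`V̄*_{n+1}(x̂,q) = max_{û∈Û} min_{ŵ∈Ŵ} (1−δ) Σ_{x̂'} (min_{q'∈S(q,x̂')} V̄*_n(x̂',q')) T̂(x̂,û,ŵ)(x̂')`. -/
noncomputable def VbarStarGame {X Q U W : Type*} [Fintype X]
    [Fintype U] [Nonempty U] [Fintype W] [Nonempty W] [DecidableEq Q]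
    (F : Finset Q) (δ : ℝ) (T : X → U → W → X → ℝ) (S : Q → X → Finset Q)
    (hS : ∀ (q : Q) (x' : X), (S q x').Nonempty) : ℕ → X → Q → ℝ
  | 0 => fun _ q => if q ∈ F then 1 else 0
  | n + 1 => fun x q =>
      if q ∈ F then 1
      else Finset.univ.sup' Finset.univ_nonempty fun u : U =>
        Finset.univ.inf' Finset.univ_nonempty fun w : W =>
          (1 - δ) * ∑ x' : X,
            ((S q x').inf' (hS q x') fun q' => VbarStarGame F δ T S hS n x' q') * T x u w x'

/-- For every horizon `H` and every `(x̂,q)`, the value `V̄*_H(x̂,q)` of the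
max-min Bellman recursion equals the max over Markov policies `ρ` of Player I of the min over
Markov policies `λ` of Player II of `V̄^{ρ,λ}_H(x̂,q)`, both extrema being attained: there is a
policy `ρ` whose guaranteed value against every `λ` is at least `V̄*_H(x̂,q)`, and against every
`ρ` Player II has a policy `λ` pushing the value down to at most `V̄*_H(x̂,q)`. -/
theorem VbarStarGame_eq_maxmin
    {X Q U W : Type*} [Fintype X] [Fintype Q] [Fintype U] [Fintype W]
    [Nonempty X] [Nonempty Q] [Nonempty U] [Nonempty W] [DecidableEq Q]
    (F : Finset Q) (δ : ℝ) (hδ0 : 0 ≤ δ) (hδ1 : δ ≤ 1)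
    (T : X → U → W → X → ℝ) (S : Q → X → Finset Q)
    (hS : ∀ (q : Q) (x' : X), (S q x').Nonempty)
    (hT0 : ∀ (x : X) (u : U) (w : W) (x' : X), 0 ≤ T x u w x')
    (hT1 : ∀ (x : X) (u : U) (w : W), ∑ x' : X, T x u w x' = 1) :
    ∀ (H : ℕ) (x : X) (q : Q),
      (∃ ρ : ℕ → X → Q → U, ∀ lam : ℕ → X → Q → U → W,
          VbarStarGame F δ T S hS H x q ≤ Vpol F δ T S hS ρ lam H H x q) ∧
      (∀ ρ : ℕ → X → Q → U, ∃ lam : ℕ → X → Q → U → W,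
          Vpol F δ T S hS ρ lam H H x q ≤ VbarStarGame F δ T S hS H x q) := by
  intro H
  classical
  have h1δ : (0:ℝ) ≤ 1 - δ := by linarith
  -- one-step value for Player I input `u` and Player II input `w` against level-`n` optimum
  set g : ℕ → X → Q → U → W → ℝ := fun n x q u w =>
    (1 - δ) * ∑ x' : X,
      ((S q x').inf' (hS q x') fun q' => VbarStarGame F δ T S hS n x' q') * T x u w x'
    with hg
  -- optimal Player I Markov policy
  have hex : ∀ (k : ℕ) (x : X) (q : Q), ∃ u : U,
      (Finset.univ.sup' Finset.univ_nonempty fun u : U =>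
        Finset.univ.inf' Finset.univ_nonempty fun w : W => g (H - k - 1) x q u w)
      = Finset.univ.inf' Finset.univ_nonempty fun w : W => g (H - k - 1) x q u w := by
    intro k x q
    obtain ⟨u, -, hu⟩ := Finset.exists_mem_eq_sup' (Finset.univ_nonempty (α := U))
      (fun u : U => Finset.univ.inf' Finset.univ_nonempty fun w : W => g (H - k - 1) x q u w)
    exact ⟨u, hu⟩
  set ρs : ℕ → X → Q → U := fun k x q => Classical.choose (hex k x q) with hρs
  have hρspec : ∀ (k : ℕ) (x : X) (q : Q),
      (Finset.univ.sup' Finset.univ_nonempty fun u : U =>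
        Finset.univ.inf' Finset.univ_nonempty fun w : W => g (H - k - 1) x q u w)
      = Finset.univ.inf' Finset.univ_nonempty fun w : W => g (H - k - 1) x q (ρs k x q) w :=
    fun k x q => Classical.choose_spec (hex k x q)
  -- optimal Player II Markov policy
  have hexw : ∀ (k : ℕ) (x : X) (q : Q) (u : U), ∃ w : W,
      (Finset.univ.inf' Finset.univ_nonempty fun w : W => g (H - k - 1) x q u w)
      = g (H - k - 1) x q u w := by
    intro k x q u
    obtain ⟨w, -, hw⟩ := Finset.exists_mem_eq_inf' (Finset.univ_nonempty (α := W))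
      (fun w : W => g (H - k - 1) x q u w)
    exact ⟨w, hw⟩
  set lams : ℕ → X → Q → U → W := fun k x q u => Classical.choose (hexw k x q u) with hlams
  have hlamspec : ∀ (k : ℕ) (x : X) (q : Q) (u : U),
      (Finset.univ.inf' Finset.univ_nonempty fun w : W => g (H - k - 1) x q u w)
      = g (H - k - 1) x q u (lams k x q u) :=
    fun k x q u => Classical.choose_spec (hexw k x q u)
  -- Player I guarantee
  have key1 : ∀ n, n ≤ H → ∀ (lam : ℕ → X → Q → U → W) (x : X) (q : Q),
      VbarStarGame F δ T S hS n x q ≤ Vpol F δ T S hS ρs lam H n x q := by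
    intro n
    induction n with
    | zero => intro _ lam x q; simp [VbarStarGame, Vpol]
    | succ n ih =>
      intro hn lam x q
      have hn' : n ≤ H := Nat.le_of_succ_le hn
      by_cases hq : q ∈ F
      · simp [VbarStarGame, Vpol, hq]
      · have hidx : H - (H - n - 1) - 1 = n := by omega
        have h1 : VbarStarGame F δ T S hS (n+1) x q
            = Finset.univ.inf' Finset.univ_nonempty
                fun w : W => g n x q (ρs (H - n - 1) x q) w := by
          have := hρspec (H - n - 1) x q
          rw [hidx] at this
          simp only [VbarStarGame]; rw [if_neg hq, ← this, hg]
        set u := ρs (H - n - 1) x q with hu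
        set w := lam (H - n - 1) x q u with hw
        have h2 : VbarStarGame F δ T S hS (n+1) x q ≤ g n x q u w := by
          rw [h1]
          exact Finset.inf'_le _ (Finset.mem_univ w)
        refine h2.trans ?_
        simp only [Vpol]; rw [if_neg hq]
        refine mul_le_mul_of_nonneg_left ?_ h1δ
        refine Finset.sum_le_sum fun x' _ => ?_
        refine mul_le_mul_of_nonneg_right ?_ (hT0 x u w x')
        refine Finset.le_inf' _ _ fun q' hq' => ?_
        exact le_trans (Finset.inf'_le _ hq') (ih hn' lam x' q')
  -- Player II response
  have key2 : ∀ (ρ : ℕ → X → Q → U), ∀ n, n ≤ H → ∀ (x : X) (q : Q),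
      Vpol F δ T S hS ρ lams H n x q ≤ VbarStarGame F δ T S hS n x q := by
    intro ρ n
    induction n with
    | zero => intro _ x q; simp [VbarStarGame, Vpol]
    | succ n ih =>
      intro hn x q
      have hn' : n ≤ H := Nat.le_of_succ_le hn
      by_cases hq : q ∈ F
      · simp [VbarStarGame, Vpol, hq]
      · have hidx : H - (H - n - 1) - 1 = n := by omega
        set u := ρ (H - n - 1) x q with hu
        set w := lams (H - n - 1) x q u with hw
        have h2 : Vpol F δ T S hS ρ lams H (n+1) x q ≤ g n x q u w := by
          simp only [Vpol]; rw [if_neg hq, hg]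
          refine mul_le_mul_of_nonneg_left ?_ h1δ
          refine Finset.sum_le_sum fun x' _ => ?_
          refine mul_le_mul_of_nonneg_right ?_ (hT0 x u w x')
          refine Finset.le_inf' _ _ fun q' hq' => ?_
          exact le_trans (Finset.inf'_le _ hq') (ih hn' x' q')
        refine h2.trans ?_
        have h3 : g n x q u w
            = Finset.univ.inf' Finset.univ_nonempty fun w' : W => g n x q u w' := by
          have := hlamspec (H - n - 1) x q u
          rw [hidx] at this
          rw [hw, ← this]
        rw [h3]; simp only [VbarStarGame]; rw [if_neg hq]
        refine le_trans ?_ (Finset.le_sup' _ (Finset.mem_univ u))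
        exact le_of_eq rfl
  intro x q
  exact ⟨⟨ρs, fun lam => key1 H le_rfl lam x q⟩, fun ρ => ⟨lams, key2 ρ H le_rfl x q⟩⟩
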